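/- Let F be a field of characteristic p > 0 with an m-variate iterative derivation θ, and for ℓ ∈ ℕ set J_ℓ := { j ∈ ℕ^m \ {0} : j_i < p^ℓ for all i } and F_ℓ := ∩_{j∈J_ℓ} ker(θ^{(j)}). Then for all ℓ_1, ℓ_2 ∈ ℕ: F_{ℓ_1+ℓ_2} = { y ∈ F_{ℓ_1} : θ^{(p^{ℓ_1}·a)}(y) = 0 for all a ∈ J_{ℓ_2} }, where p^{ℓ_1}·a denotes the multi-index obtained by multiplying each coordinate of a by p^{ℓ_1}. -/

import Mathlib

open scoped TensorProduct

/-- `binom(i+j, i)` for multi-indices: `∏ μ, (i μ + j μ).choose (i μ)`. -/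
def multiChoose {m : ℕ} (i j : Fin m →₀ ℕ) : ℕ :=
  ∏ μ : Fin m, Nat.choose (i μ + j μ) (i μ)

/-- An `m`-variate iterative derivation on a commutative ring `R`: a ring homomorphism
`θ : R → R[[T_1,…,T_m]]`, written `θ(r) = Σ_k θ^{(k)}(r)·T^k`, with `θ^{(0)} = id` and
`θ^{(i)} ∘ θ^{(j)} = binom(i+j,i)·θ^{(i+j)}` for all multi-indices `i, j`. -/
structure IterativeDerivation (m : ℕ) (R : Type*) [CommRing R] where
  toRingHom : R →+* MvPowerSeries (Fin m) R
  coeff_zero : ∀ r : R, MvPowerSeries.coeff 0 (toRingHom r) = r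
  iterate : ∀ (i j : Fin m →₀ ℕ) (r : R),
    MvPowerSeries.coeff i (toRingHom (MvPowerSeries.coeff j (toRingHom r))) =
      multiChoose i j • MvPowerSeries.coeff (i + j) (toRingHom r)

namespace IterativeDerivation

/-- The coefficient maps `θ^{(k)} : R → R` of an iterative derivation. -/
noncomputable def D {m : ℕ} {R : Type*} [CommRing R] (θ : IterativeDerivation m R)
    (k : Fin m →₀ ℕ) (r : R) : R :=
  MvPowerSeries.coeff k (θ.toRingHom r)

end IterativeDerivation

/-- The index set `J_ℓ = { j ∈ ℕ^m \ {0} : j_i < p^ℓ for all i }`. -/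
def Jset (m p ℓ : ℕ) : Set (Fin m →₀ ℕ) :=
  {j : Fin m →₀ ℕ | j ≠ 0 ∧ ∀ i : Fin m, j i < p ^ ℓ}

/-
If `y` lies in `F_{ℓ₁}` and is killed by the `θ^{(p^{ℓ₁}·a)}`, write `j ∈ J_{ℓ₁+ℓ₂}` as
`j = b + p^{ℓ₁}·a` with `b_μ < p^{ℓ₁}` and `a_μ < p^{ℓ₂}`. By Lucas's theorem
`binom(b + p^{ℓ₁}a, b) ≡ 1 mod p`, so the iteration rule gives `θ^{(j)} = θ^{(b)} ∘ θ^{(p^{ℓ₁}·a)}`,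
which kills `y` when `a ≠ 0`; when `a = 0`, `j = b ∈ J_{ℓ₁}`.
-/

theorem Nat.choose_add_pow_mul_modEq_one {p : ℕ} [Fact p.Prime] {ℓ b : ℕ} (a : ℕ)
    (hb : b < p ^ ℓ) : (b + p ^ ℓ * a).choose b ≡ 1 [MOD p] := by
  induction ℓ generalizing b with
  | zero =>
    obtain rfl : b = 0 := by simpa using hb
    simp [Nat.ModEq.refl]
  | succ ℓ ih =>
    have hp : 0 < p := (Fact.out : p.Prime).pos
    have hsplit : b + p ^ (ℓ + 1) * a = b + p * (p ^ ℓ * a) := by ring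
    have hbp : b / p < p ^ ℓ := Nat.div_lt_of_lt_mul (by rwa [← pow_succ'])
    calc (b + p ^ (ℓ + 1) * a).choose b
        ≡ ((b + p ^ (ℓ + 1) * a) % p).choose (b % p) *
            ((b + p ^ (ℓ + 1) * a) / p).choose (b / p) [MOD p] :=
          Choose.choose_modEq_choose_mod_mul_choose_div_nat
      _ = (b / p + p ^ ℓ * a).choose (b / p) := by
          rw [hsplit, Nat.add_mul_mod_self_left, Nat.add_mul_div_left _ _ hp, Nat.choose_self,
            one_mul]
      _ ≡ 1 [MOD p] := ih hbp

theorem multiChoose_add_pow_smul_cast_eq_one {R : Type*} [CommRing R] {m p ℓ : ℕ}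
    [Fact p.Prime] [CharP R p] {b : Fin m →₀ ℕ} (hb : ∀ μ, b μ < p ^ ℓ) (a : Fin m →₀ ℕ) :
    (multiChoose b (p ^ ℓ • a) : R) = 1 := by
  rw [multiChoose, Nat.cast_prod]
  refine Finset.prod_eq_one fun μ _ => ?_
  rw [Finsupp.smul_apply, smul_eq_mul, ← Nat.cast_one]
  exact CharP.natCast_eq_natCast' R p (Nat.choose_add_pow_mul_modEq_one (a μ) (hb μ))

namespace IterativeDerivation

variable {m : ℕ} {R : Type*} [CommRing R] (θ : IterativeDerivation m R)

@[simp]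
theorem D_apply_zero (k : Fin m →₀ ℕ) : θ.D k 0 = 0 := by
  simp [D]

theorem D_D (i j : Fin m →₀ ℕ) (r : R) : θ.D i (θ.D j r) = multiChoose i j • θ.D (i + j) r :=
  θ.iterate i j r

theorem D_add_pow_smul {p ℓ : ℕ} [Fact p.Prime] [CharP R p] {b : Fin m →₀ ℕ}
    (hb : ∀ μ, b μ < p ^ ℓ) (a : Fin m →₀ ℕ) (r : R) :
    θ.D (b + p ^ ℓ • a) r = θ.D b (θ.D (p ^ ℓ • a) r) := by
  rw [D_D, nsmul_eq_mul, multiChoose_add_pow_smul_cast_eq_one hb, one_mul]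

end IterativeDerivation

theorem Finsupp.exists_add_pow_smul_eq {ι : Type*} {p ℓ₁ ℓ₂ : ℕ} (hp : 0 < p) {j : ι →₀ ℕ}
    (hj : ∀ μ, j μ < p ^ (ℓ₁ + ℓ₂)) :
    ∃ b a : ι →₀ ℕ, (∀ μ, b μ < p ^ ℓ₁) ∧ (∀ μ, a μ < p ^ ℓ₂) ∧ b + p ^ ℓ₁ • a = j := by
  have hq : 0 < p ^ ℓ₁ := pow_pos hp ℓ₁
  refine ⟨j.mapRange (· % p ^ ℓ₁) (Nat.zero_mod _), j.mapRange (· / p ^ ℓ₁) (Nat.zero_div _),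
    fun μ => Nat.mod_lt _ hq, fun μ => Nat.div_lt_of_lt_mul ?_, ?_⟩
  · rw [← pow_add]
    exact hj μ
  · ext μ
    exact Nat.mod_add_div _ _

theorem Jset_mono {m p : ℕ} (hp : 0 < p) : Monotone (Jset m p) :=
  fun _ _ hℓ _ hj => ⟨hj.1, fun μ => (hj.2 μ).trans_le (Nat.pow_le_pow_right hp hℓ)⟩

theorem pow_smul_mem_Jset_add {m p ℓ₁ ℓ₂ : ℕ} (hp : 0 < p) {a : Fin m →₀ ℕ}
    (ha : a ∈ Jset m p ℓ₂) : p ^ ℓ₁ • a ∈ Jset m p (ℓ₁ + ℓ₂) := by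
  refine ⟨smul_ne_zero (pow_ne_zero _ hp.ne') ha.1, fun μ => ?_⟩
  rw [Finsupp.smul_apply, smul_eq_mul, pow_add]
  exact Nat.mul_lt_mul_of_pos_left (ha.2 μ) (pow_pos hp ℓ₁)

/-- Let `F` be a field of characteristic `p > 0` with an `m`-variate iterative
derivation `θ`, and `F_ℓ := ∩_{j ∈ J_ℓ} ker θ^{(j)}`. Then for all `ℓ₁, ℓ₂`:
`F_{ℓ₁+ℓ₂} = { y ∈ F_{ℓ₁} : θ^{(p^{ℓ₁}·a)}(y) = 0 for all a ∈ J_{ℓ₂} }`. -/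
theorem kernel_field_add
    (m p : ℕ) (hp : p.Prime) (F : Type) [Field F] [CharP F p]
    (θ : IterativeDerivation m F) :
    ∀ ℓ₁ ℓ₂ : ℕ,
      {y : F | ∀ j ∈ Jset m p (ℓ₁ + ℓ₂), θ.D j y = 0} =
        {y : F | (∀ j ∈ Jset m p ℓ₁, θ.D j y = 0) ∧
          ∀ a ∈ Jset m p ℓ₂, θ.D (p ^ ℓ₁ • a) y = 0} := by
  have : Fact p.Prime := ⟨hp⟩
  intro ℓ₁ ℓ₂
  ext y
  constructor
  · intro hy
    exact ⟨fun j hj => hy j (Jset_mono hp.pos le_self_add hj),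
      fun a ha => hy _ (pow_smul_mem_Jset_add hp.pos ha)⟩
  · rintro ⟨hy₁, hy₂⟩ j hj
    obtain ⟨b, a, hb, ha, rfl⟩ := Finsupp.exists_add_pow_smul_eq hp.pos hj.2
    rcases eq_or_ne a 0 with rfl | ha₀
    · rw [smul_zero, add_zero] at hj ⊢
      exact hy₁ b ⟨hj.1, hb⟩
    · rw [θ.D_add_pow_smul hb, hy₂ a ⟨ha₀, ha⟩, θ.D_apply_zero]
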